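/- arXiv:1403.0800 — 6 statements merged into one kernel-verified Lean document; each statement's English description precedes it below -/
import Mathlib

section
/- Let T, P, A be strings over an alphabet such that P·A is an infix of T and there is no branching between P and P·A in T. Then exactly one of the following two statements holds: (1) the rightmost occurrence position of P in T equals the rightmost occurrence position of P·A in T; (2) there exists a string B with |B| < |A| such that P·B is a suffix of T. -/
/-- `S` occurs at position `i` in `T`. -/
def OccursAt {α : Type*} (S T : List α) (i : ℕ) : Prop :=
  i + S.length ≤ T.length ∧ S <+: T.drop i

/-- `S` is an infix (substring) of `T`: it occurs at some position. -/
def IsInfixOf {α : Type*} (S T : List α) : Prop :=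
  ∃ i, OccursAt S T i

/-- `S` is a suffix of `T`: it occurs at position `|T| - |S|`. -/
def IsSuffixOf {α : Type*} (S T : List α) : Prop :=
  OccursAt S T (T.length - S.length)

/-- The rightmost occurrence position of `S` in `T`. -/
noncomputable def rightmost {α : Type*} (S T : List α) : ℕ :=
  sSup {i | OccursAt S T i}

/-- There is no branching between `P` and `P ++ A` in `T`. -/
def NoBranching {α : Type*} (T P A : List α) : Prop :=
  IsInfixOf (P ++ A) T ∧
    ∀ k ≤ A.length, ∀ C C' : List α, C.length = k → C'.length = k →
      IsInfixOf (P ++ C) T → IsInfixOf (P ++ C') T → C = C'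

/-!
Let `j` be the rightmost occurrence of `P` and `R` the text after that occurrence. If `|R| ≥ |A|`,
the first `|A|` letters of `R` extend `P` to an infix of `T`, so by the absence of branching they
spell `A`; thus `P·A` occurs at `j`, which is then also its rightmost occurrence, and no suffix
`P·B` can start to the right of `j`. If `|R| < |A|`, then `P·R` itself is a suffix of `T`, and
`P·A` cannot occur at or after position `j`.
-/

namespace OccursAt

variable {α : Type*} {S U T : List α} {i : ℕ}

theorem of_append (h : OccursAt (S ++ U) T i) : OccursAt S T i := by
  refine ⟨?_, (List.prefix_append S U).trans h.2⟩
  have := h.1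
  simp only [List.length_append] at this
  omega

theorem bddAbove_setOf (S T : List α) : BddAbove {i | OccursAt S T i} :=
  ⟨T.length, fun _ hk => le_trans (Nat.le_add_right _ _) hk.1⟩

theorem le_rightmost (h : OccursAt S T i) : i ≤ rightmost S T :=
  le_csSup (bddAbove_setOf S T) h

theorem rightmost_occursAt (h : OccursAt S T i) : OccursAt S T (rightmost S T) :=
  Nat.sSup_mem ⟨i, h⟩ (bddAbove_setOf S T)

theorem append_take (h : OccursAt S T i) (n : ℕ) :
    OccursAt (S ++ (T.drop (i + S.length)).take n) T i := by
  obtain ⟨rest, hrest⟩ := h.2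
  have hdrop : T.drop (i + S.length) = rest := by
    rw [← List.drop_drop, ← hrest, List.drop_left]
  refine ⟨?_, ?_⟩
  · have := h.1
    simp only [List.length_append, List.length_take, List.length_drop] at this ⊢
    omega
  · rw [hdrop, ← hrest]
    exact (List.prefix_append_right_inj S).2 (List.take_prefix n rest)

theorem isSuffixOf (h : OccursAt S T i) (hend : i + S.length = T.length) : IsSuffixOf S T := by
  rwa [IsSuffixOf, show T.length - S.length = i by omega]

end OccursAt

theorem rightmost_append_le {α : Type*} {S U T : List α} (h : IsInfixOf (S ++ U) T) :
    rightmost (S ++ U) T ≤ rightmost S T :=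
  let ⟨_, hi⟩ := h
  hi.rightmost_occursAt.of_append.le_rightmost

theorem length_le_of_occursAt_rightmost_of_isSuffixOf {α : Type*} {S U B T : List α}
    (hU : OccursAt (S ++ U) T (rightmost S T)) (hB : IsSuffixOf (S ++ B) T) :
    U.length ≤ B.length := by
  have hle := hB.of_append.le_rightmost
  have h₁ := hB.1
  have h₂ := hU.1
  simp only [List.length_append] at h₁ h₂ hle
  omega

/-- Lemma 1: exactly one of the two cases holds. -/
theorem most_recent_match_cases {α : Type*} (T P A : List α)
    (h : NoBranching T P A) :
    Xor' (rightmost P T = rightmost (P ++ A) T)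
      (∃ B : List α, B.length < A.length ∧ IsSuffixOf (P ++ B) T) := by
  obtain ⟨⟨i, hi⟩, hnb⟩ := h
  have hP : OccursAt P T (rightmost P T) := hi.of_append.rightmost_occursAt
  set R := T.drop (rightmost P T + P.length) with hR
  have hRlen : R.length + (rightmost P T + P.length) = T.length := by
    have := hP.1
    rw [hR, List.length_drop]
    omega
  rcases le_or_gt A.length R.length with hAR | hRA
  · have hA : OccursAt (P ++ A) T (rightmost P T) := by
      have hC := hP.append_take A.length
      rwa [hnb A.length le_rfl _ A (by rw [List.length_take, ← hR]; omega) rfl ⟨_, hC⟩ ⟨i, hi⟩] at hC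
    refine Or.inl ⟨le_antisymm hA.le_rightmost (rightmost_append_le ⟨i, hi⟩), ?_⟩
    rintro ⟨B, hBA, hB⟩
    exact absurd (length_le_of_occursAt_rightmost_of_isSuffixOf hA hB) (by omega)
  · refine Or.inr ⟨⟨R, hRA, ?_⟩, fun heq => ?_⟩
    · have hPR := hP.append_take R.length
      rw [← hR, List.take_length] at hPR
      exact hPR.isSuffixOf (by simp only [List.length_append]; omega)
    · have := hi.rightmost_occursAt.1
      simp only [List.length_append, ← heq] at this
      omega
end

section
/- Let T be a string, a a character, and S a string. If S occurs at position i in T ++ [a] but S does not occur at position i in T, then i + |S| = |T| + 1; in particular, S is a suffix of T ++ [a]. -/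
theorem OccursAt.of_append_s2 {α : Type*} {S T U : List α} {i : ℕ}
    (h : OccursAt S (T ++ U) i) (hle : i + S.length ≤ T.length) : OccursAt S T i :=
  ⟨hle, List.prefix_of_prefix_length_le h.2 ((List.prefix_append T U).drop i)
    (by rw [List.length_drop]; omega)⟩

theorem OccursAt.isSuffixOf_s2 {α : Type*} {S T : List α} {i : ℕ} (h : OccursAt S T i)
    (hend : i + S.length = T.length) : IsSuffixOf S T := by
  rwa [IsSuffixOf, show T.length - S.length = i by omega]

/-- A new occurrence created by appending one character must be a suffix of the
extended string. -/
theorem new_occurrence_is_suffix {α : Type*} (T : List α) (a : α) (S : List α)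
    (i : ℕ) (h₁ : OccursAt S (T ++ [a]) i) (h₂ : ¬ OccursAt S T i) :
    i + S.length = T.length + 1 ∧ IsSuffixOf S (T ++ [a]) := by
  have hend : i + S.length = T.length + 1 := by
    have hle : i + S.length ≤ T.length + 1 := by simpa using h₁.1
    by_contra hne
    exact h₂ (h₁.of_append_s2 (by omega))
  exact ⟨hend, h₁.isSuffixOf_s2 (by simpa using hend)⟩
end

section
/- Let T, X, R be strings over an alphabet such that there is no branching between X and X·R in T. Then for every string B and every position i, the string B·X·R occurs at position i in T if and only if B·X occurs at position i in T and i + |B| + |X| + |R| ≤ |T|. -/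
/-! A window `X·C` of `T` with `|C| = |R|` must have `C = R`, since `X·R` is itself an infix and `X`
admits only one continuation of each length up to `|R|`. Hence, after `B`, an occurrence of `X` extends
to one of `X·R` as soon as there is room for it. -/

theorem List.append_prefix_iff {α : Type*} {S U D : List α} :
    S ++ U <+: D ↔ S <+: D ∧ U <+: D.drop S.length := by
  constructor
  · rintro ⟨t, rfl⟩
    simp
  · rintro ⟨hS, hU⟩
    rw [← List.prefix_iff_eq_append.mp hS]
    exact (List.prefix_append_right_inj S).mpr hU

theorem occursAt_append_iff {α : Type*} {S U T : List α} {i : ℕ} :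
    OccursAt (S ++ U) T i ↔ OccursAt S T i ∧ OccursAt U T (i + S.length) := by
  simp only [OccursAt, List.length_append, List.append_prefix_iff, List.drop_drop]
  constructor
  · rintro ⟨hlen, hS, hU⟩
    exact ⟨⟨by omega, hS⟩, by omega, hU⟩
  · rintro ⟨⟨-, hS⟩, hlen, hU⟩
    exact ⟨by omega, hS, hU⟩

theorem occursAt_take_drop {α : Type*} {T : List α} {i k : ℕ} (h : i + k ≤ T.length) :
    OccursAt ((T.drop i).take k) T i :=
  ⟨by simp only [List.length_take, List.length_drop]; omega, List.take_prefix _ _⟩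

namespace NoBranching

variable {α : Type*} {T P A : List α}

theorem eq_of_isInfixOf (h : NoBranching T P A) {C : List α} (hC : IsInfixOf (P ++ C) T)
    (hlen : C.length = A.length) : C = A :=
  h.2 A.length le_rfl C A hlen rfl hC h.1

theorem occursAt_append_iff (h : NoBranching T P A) {j : ℕ} :
    OccursAt (P ++ A) T j ↔ OccursAt P T j ∧ j + P.length + A.length ≤ T.length := by
  refine ⟨fun hPA => ⟨(_root_.occursAt_append_iff.mp hPA).1, ?_⟩, fun ⟨hP, hroom⟩ => ?_⟩
  · simpa [Nat.add_assoc] using hPA.1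
  · set C := (T.drop (j + P.length)).take A.length
    have hC : OccursAt C T (j + P.length) := occursAt_take_drop hroom
    have hCA : C = A :=
      h.eq_of_isInfixOf ⟨j, _root_.occursAt_append_iff.mpr ⟨hP, hC⟩⟩
        (by simp only [C, List.length_take, List.length_drop]; omega)
    exact _root_.occursAt_append_iff.mpr ⟨hP, hCA ▸ hC⟩

end NoBranching

/-- If there is no branching between X and X·R in T, then any occurrence of B·X
that has room to extend is an occurrence of B·X·R. -/
theorem occurs_append_iff_of_noBranching {α : Type*} (T X R : List α)
    (h : NoBranching T X R) :
    ∀ (B : List α) (i : ℕ),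
      OccursAt (B ++ X ++ R) T i ↔
        OccursAt (B ++ X) T i ∧ i + B.length + X.length + R.length ≤ T.length := by
  intro B i
  rw [List.append_assoc, occursAt_append_iff, h.occursAt_append_iff, occursAt_append_iff, and_assoc]
end

section
/- Let T, P, A, B be strings over an alphabet such that there is no branching between P and P·A in T, P·B is a suffix of T, and |B| < |A|. Then B equals the length-|B| prefix of A (i.e., B is a prefix of A). -/
section

variable {α : Type*} {S S' T : List α}

theorem OccursAt.of_isPrefix {i : ℕ} (hS : S <+: S') (h : OccursAt S' T i) :
    OccursAt S T i :=
  ⟨le_trans (by simpa using hS.length_le) h.1, hS.trans h.2⟩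

theorem IsInfixOf.of_isPrefix (hS : S <+: S') (h : IsInfixOf S' T) : IsInfixOf S T :=
  h.imp fun _ => OccursAt.of_isPrefix hS

theorem IsSuffixOf.isInfixOf (h : IsSuffixOf S T) : IsInfixOf S T :=
  ⟨_, h⟩

end

/-- Case 2 of Lemma 1: the implicit suffix P·B lies on the same edge,
i.e. B is a prefix of A. -/
theorem short_suffix_is_prefix {α : Type*} (T P A B : List α)
    (h : NoBranching T P A) (hB : IsSuffixOf (P ++ B) T)
    (hlen : B.length < A.length) :
    B = A.take B.length := by
  obtain ⟨hPA, hunique⟩ := h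
  have hPA' : IsInfixOf (P ++ A.take B.length) T :=
    hPA.of_isPrefix ((List.prefix_append_right_inj P).2 (List.take_prefix _ A))
  exact hunique B.length hlen.le B (A.take B.length) rfl
    (List.length_take_of_le hlen.le) hB.isInfixOf hPA'
end

section
/- Let T and S be strings over an alphabet such that S is a suffix of T and S occurs in T at some position strictly less than |T| − |S|. Then every suffix S' of S is a suffix of T and occurs in T at some position strictly less than |T| − |S'|. -/
theorem isSuffixOf_iff_isSuffix {α : Type*} {S T : List α} : IsSuffixOf S T ↔ S <:+ T := by
  constructor
  · rintro ⟨hlen, hpre⟩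
    have hdrop : T.drop (T.length - S.length) = S :=
      (hpre.eq_of_length (by simp only [List.length_drop]; omega)).symm
    exact hdrop ▸ List.drop_suffix _ _
  · rintro ⟨U, rfl⟩
    have hU : (U ++ S).length - S.length = U.length := by simp
    exact ⟨by simp, by rw [hU, List.drop_left]⟩

theorem IsSuffixOf.trans {α : Type*} {R S T : List α} (hRS : IsSuffixOf R S)
    (hST : IsSuffixOf S T) : IsSuffixOf R T :=
  isSuffixOf_iff_isSuffix.mpr
    ((isSuffixOf_iff_isSuffix.mp hRS).trans (isSuffixOf_iff_isSuffix.mp hST))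

theorem OccursAt.of_append_left {α : Type*} {U S T : List α} {i : ℕ}
    (h : OccursAt (U ++ S) T i) : OccursAt S T (i + U.length) := by
  obtain ⟨hlen, R, hR⟩ := h
  refine ⟨by simp only [List.length_append] at hlen; omega, R, ?_⟩
  rw [← List.drop_drop, ← hR, List.append_assoc, List.drop_left]

/-- Suffixes shorter than an active suffix are themselves active. -/
theorem active_suffix_closed_under_suffix {α : Type*} (T S : List α)
    (hS : IsSuffixOf S T) (hact : ∃ i < T.length - S.length, OccursAt S T i) :
    ∀ S' : List α, IsSuffixOf S' S →
      IsSuffixOf S' T ∧ ∃ j < T.length - S'.length, OccursAt S' T j := by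
  intro S' hS'
  obtain ⟨i, hi, hocc⟩ := hact
  obtain ⟨U, rfl⟩ := isSuffixOf_iff_isSuffix.mp hS'
  refine ⟨hS'.trans hS, i + U.length, ?_, hocc.of_append_left⟩
  simp only [List.length_append] at hi ⊢
  omega
end

section
/- Let k be a positive natural number and m : Fin k → ℕ a family of natural numbers with total sum n. Write q = n / k (integer division) and r = n % k. Then the sum over i of (m i)² is at least (k − r)·q² + r·(q + 1)². Consequently, the number n² − Σᵢ (m i)² of ordered pairs of items lying in different parts of a partition of n items into k parts of sizes m i is maximized when the part sizes are as equal as possible (all equal to q or q + 1). -/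
/-!
For integers `x` and `q`, the integer `x - q` is at most its own square, i.e. `x ^ 2` lies above
the line through `(q, q ^ 2)` and `(q + 1, (q + 1) ^ 2)`. Summing this over the parts with
`q = n / k` gives `∑ (m i) ^ 2 ≥ k q ^ 2 + (2 q + 1) r` where `r = n % k`, and the right-hand side
is exactly the sum of squares of `k - r` parts of size `q` and `r` parts of size `q + 1`.
-/

open Finset

theorem Int.secant_le_sq (x q : ℤ) : q ^ 2 + (2 * q + 1) * (x - q) ≤ x ^ 2 := by
  linear_combination Int.le_self_sq (x - q)

theorem Finset.secant_le_sum_sq {ι : Type*} (s : Finset ι) (f : ι → ℤ) (q : ℤ) :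
    #s * q ^ 2 + (2 * q + 1) * (∑ i ∈ s, f i - #s * q) ≤ ∑ i ∈ s, f i ^ 2 := by
  calc #s * q ^ 2 + (2 * q + 1) * (∑ i ∈ s, f i - #s * q)
      = ∑ i ∈ s, (q ^ 2 + (2 * q + 1) * (f i - q)) := by
        rw [sum_add_distrib, ← mul_sum, sum_sub_distrib]
        simp only [sum_const, nsmul_eq_mul]
    _ ≤ ∑ i ∈ s, f i ^ 2 := sum_le_sum fun i _ => Int.secant_le_sq (f i) q

theorem Finset.balanced_sum_sq_le_sum_sq {ι : Type*} (s : Finset ι) (f : ι → ℕ) :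
    (#s - (∑ i ∈ s, f i) % #s) * ((∑ i ∈ s, f i) / #s) ^ 2 +
        (∑ i ∈ s, f i) % #s * ((∑ i ∈ s, f i) / #s + 1) ^ 2 ≤ ∑ i ∈ s, f i ^ 2 := by
  rcases s.eq_empty_or_nonempty with rfl | hs
  · simp
  have hr : (∑ i ∈ s, f i) % #s ≤ #s := (Nat.mod_lt _ hs.card_pos).le
  have hsum := s.secant_le_sum_sq (fun i => (f i : ℤ)) ((∑ i ∈ s, f i) / #s : ℕ)
  have hn := Nat.div_add_mod (∑ i ∈ s, f i) #s
  simp only [← Nat.cast_sum] at hsum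
  generalize ∑ i ∈ s, f i = n, #s = k at *
  generalize n / k = q, n % k = r at *
  zify [hr] at hn ⊢
  linear_combination hsum + (2 * (q : ℤ) + 1) * hn

theorem sum_sq_ge_balanced_general (k : ℕ) (m : Fin k → ℕ) (n : ℕ)
    (hn : ∑ i, m i = n) :
    (k - n % k) * (n / k) ^ 2 + (n % k) * (n / k + 1) ^ 2 ≤ ∑ i, (m i) ^ 2 ∧
      n ^ 2 - ∑ i, (m i) ^ 2 ≤
        n ^ 2 - ((k - n % k) * (n / k) ^ 2 + (n % k) * (n / k + 1) ^ 2) := by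
  have h := (univ : Finset (Fin k)).balanced_sum_sq_le_sum_sq m
  rw [card_univ, Fintype.card_fin, hn] at h
  exact ⟨h, Nat.sub_le_sub_left h _⟩

/-- The sum of squares of part sizes is minimized (so the number of cross pairs
is maximized) when the parts are as equal as possible. -/
theorem sum_sq_ge_balanced (k : ℕ) (hk : 0 < k) (m : Fin k → ℕ) (n : ℕ)
    (hn : ∑ i, m i = n) :
    (k - n % k) * (n / k) ^ 2 + (n % k) * (n / k + 1) ^ 2 ≤ ∑ i, (m i) ^ 2 ∧
      n ^ 2 - ∑ i, (m i) ^ 2 ≤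
        n ^ 2 - ((k - n % k) * (n / k) ^ 2 + (n % k) * (n / k + 1) ^ 2) :=
  sum_sq_ge_balanced_general k m n hn
end
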